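/- Let G and G' be graphs and let C be a blob of G. If C is not immersed in any blob of G', then G is not immersed in G'. -/

import Mathlib

/-!
Restricting an immersion of `G` into `G'` to the blob `C` gives an immersion of the
2-edge-connected graph `C` into `G'`. The union `D₀` of the images of its vertices and of its
paths is again 2-edge-connected: the paths are edge-disjoint, so an edge `f` of `D₀` lies on the
path of a single edge `e` of `C`, and `C - e` is still connected; every vertex of `D₀` reaches
the image of a vertex of `C` along its path without using `f`, since `f` misses one of the two
sides of that path. The 2-edge-connected subgraphs of `G'` containing `D₀` all share a vertex,
so their union is 2-edge-connected, hence a blob `D` of `G'`, and `C` is immersed in `D`.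
-/

open SimpleGraph

/-- An immersion (strong immersion) of `H` into `G`. -/
structure Immersion {V W : Type*} (H : SimpleGraph V) (G : SimpleGraph W) where
  toFun : V → W
  injective : Function.Injective toFun
  walk : ∀ ⦃u v : V⦄, H.Adj u v → G.Walk (toFun u) (toFun v)
  walk_isPath : ∀ ⦃u v : V⦄ (h : H.Adj u v), (walk h).IsPath
  walk_nontrivial : ∀ ⦃u v : V⦄ (h : H.Adj u v), 0 < (walk h).length
  walk_symm : ∀ ⦃u v : V⦄ (h : H.Adj u v), walk h.symm = (walk h).reverse
  walk_edgeDisjoint : ∀ ⦃u v u' v' : V⦄ (h : H.Adj u v) (h' : H.Adj u' v'),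
    s(u, v) ≠ s(u', v') → ∀ e ∈ (walk h).edges, e ∉ (walk h').edges
  avoid : ∀ ⦃u v : V⦄ (h : H.Adj u v) (w : V), w ≠ u → w ≠ v → toFun w ∉ (walk h).support

/-- `H` is immersed in `G`. -/
def Immersed {V W : Type*} (H : SimpleGraph V) (G : SimpleGraph W) : Prop :=
  Nonempty (Immersion H G)

/-- A graph is 2-edge-connected if it is connected, has an edge, and stays connected
after deletion of any single edge. -/
def TwoEdgeConnected {V : Type*} (G : SimpleGraph V) : Prop :=
  G.Connected ∧ G.edgeSet.Nonempty ∧ ∀ e ∈ G.edgeSet, (G.deleteEdges {e}).Connected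

/-- A blob of `G` is a maximal 2-edge-connected subgraph of `G`. -/
def IsBlob {V : Type*} (G : SimpleGraph V) (B : G.Subgraph) : Prop :=
  TwoEdgeConnected B.coe ∧ ∀ B' : G.Subgraph, B ≤ B' → TwoEdgeConnected B'.coe → B' = B

/-- An immersion induces an isomorphism if its vertex map is a bijection preserving
and reflecting adjacency. -/
def Immersion.InducesIso {V W : Type*} {H : SimpleGraph V} {G : SimpleGraph W}
    (φ : Immersion H G) : Prop :=
  Function.Bijective φ.toFun ∧ ∀ u v : V, H.Adj u v ↔ G.Adj (φ.toFun u) (φ.toFun v)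

/-- An immersion is proper if it does not induce an isomorphism. -/
def Immersion.IsProper {V W : Type*} {H : SimpleGraph V} {G : SimpleGraph W}
    (φ : Immersion H G) : Prop := ¬ φ.InducesIso

/-- `H` is properly immersed in `G`. -/
def ProperlyImmersed {V W : Type*} (H : SimpleGraph V) (G : SimpleGraph W) : Prop :=
  ∃ φ : Immersion H G, φ.IsProper

/-- A self-immersion is trivial if it induces the identity map on vertices and sends
each edge to itself. -/
def Immersion.IsTrivial {V : Type*} {G : SimpleGraph V} (φ : Immersion G G) : Prop :=
  (∀ v, φ.toFun v = v) ∧ ∀ ⦃u v : V⦄ (h : G.Adj u v), (φ.walk h).edges = [s(u, v)]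

namespace SimpleGraph

variable {U V : Type*} {G : SimpleGraph V}

theorem Reachable.map_of_forall_adj {H : SimpleGraph U} (g : U → V)
    (hg : ∀ u v, H.Adj u v → G.Reachable (g u) (g v)) {a b : U} (h : H.Reachable a b) :
    G.Reachable (g a) (g b) := by
  rw [reachable_iff_reflTransGen] at h ⊢
  exact Relation.ReflTransGen.lift' g (fun u v huv => (reachable_iff_reflTransGen _ _).mp
    (hg u v huv)) _ _ h

/-- The trail splits at `x` into two edge-disjoint pieces, and `f` misses at least one of them. -/
theorem Walk.IsTrail.reachable_deleteEdges_or {a b x : V} {p : G.Walk a b}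
    (hp : p.IsTrail) (hx : x ∈ p.support) (f : Sym2 V) :
    (G.deleteEdges {f}).Reachable x a ∨ (G.deleteEdges {f}).Reachable x b := by
  classical
  have hnodup : ((p.takeUntil x hx).edges ++ (p.dropUntil x hx).edges).Nodup := by
    rw [← Walk.edges_append, p.take_spec hx]
    exact hp.edges_nodup
  by_cases hf : f ∈ (p.takeUntil x hx).edges
  · exact .inr ⟨(p.dropUntil x hx).toDeleteEdge f (List.disjoint_of_nodup_append hnodup hf)⟩
  · exact .inl ⟨((p.takeUntil x hx).toDeleteEdge f hf).reverse⟩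

namespace Subgraph

theorem reachable_coe_iff (B : G.Subgraph) {x y : B.verts} :
    B.coe.Reachable x y ↔ B.spanningCoe.Reachable x y := by
  refine ⟨fun h => h.map ⟨Subtype.val, id⟩, fun ⟨p⟩ => ?_⟩
  suffices ∀ {a b : V} (p : B.spanningCoe.Walk a b) (ha : a ∈ B.verts) (hb : b ∈ B.verts),
      B.coe.Reachable ⟨a, ha⟩ ⟨b, hb⟩ from this p x.2 y.2
  intro a b p
  induction p with
  | nil => exact fun _ _ => .rfl
  | cons hadj _ ih =>
    exact fun ha hb => (show B.coe.Adj ⟨_, ha⟩ ⟨_, hadj.snd_mem⟩ from hadj).reachable.trans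
      (ih _ hb)

theorem twoEdgeConnected_coe_iff (B : G.Subgraph) :
    TwoEdgeConnected B.coe ↔ B.edgeSet.Nonempty ∧
      ∀ f : Sym2 V, ∀ x ∈ B.verts, ∀ y ∈ B.verts,
        (B.spanningCoe.deleteEdges {f}).Reachable x y := by
  have edgeSet_nonempty_iff : B.coe.edgeSet.Nonempty ↔ B.edgeSet.Nonempty := by
    rw [← image_coe_edgeSet_coe, Set.image_nonempty]
  have reachable_deleteEdges_iff (e : Sym2 B.verts) (x y : B.verts) :
      (B.coe.deleteEdges {e}).Reachable x y ↔
        (B.spanningCoe.deleteEdges {Sym2.map (↑) e}).Reachable x y := by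
    rw [deleteEdges_coe_eq]
    exact (reachable_coe_iff (B.deleteEdges _) (x := x) (y := y)).trans
      (by rw [← deleteEdges_spanningCoe_eq, Set.image_singleton])
  constructor
  · rintro ⟨hconn, hne, hdel⟩
    refine ⟨edgeSet_nonempty_iff.mp hne, fun f x hx y hy => ?_⟩
    by_cases hf : f ∈ B.edgeSet
    · rw [← image_coe_edgeSet_coe] at hf
      obtain ⟨e, he, rfl⟩ := hf
      exact (reachable_deleteEdges_iff e ⟨x, hx⟩ ⟨y, hy⟩).mp ((hdel e he).preconnected _ _)
    · have hf' : f ∉ B.spanningCoe.edgeSet := by rwa [edgeSet_spanningCoe]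
      rw [deleteEdges_eq_self.mpr (Set.disjoint_singleton_right.mpr hf')]
      exact (reachable_coe_iff B).mp (hconn.preconnected ⟨x, hx⟩ ⟨y, hy⟩)
  · rintro ⟨⟨f, hf⟩, hreach⟩
    have : Nonempty B.verts := ⟨⟨_, B.mem_verts_of_mem_edge hf f.out_fst_mem⟩⟩
    refine ⟨.mk fun x y => ?_, edgeSet_nonempty_iff.mpr ⟨f, hf⟩, fun e _ => .mk fun x y => ?_⟩
    · exact (reachable_coe_iff B).mpr
        ((hreach f x x.2 y y.2).mono (SimpleGraph.deleteEdges_le _))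
    · exact (reachable_deleteEdges_iff e x y).mpr (hreach _ x x.2 y y.2)

theorem twoEdgeConnected_sSup {S : Set G.Subgraph} (hS : S.Nonempty) {v : V}
    (hv : ∀ B ∈ S, v ∈ B.verts) (h2 : ∀ B ∈ S, TwoEdgeConnected B.coe) :
    TwoEdgeConnected (sSup S).coe := by
  simp only [twoEdgeConnected_coe_iff] at h2 ⊢
  obtain ⟨B, hB⟩ := hS
  refine ⟨(h2 B hB).1.mono (edgeSet_mono (le_sSup hB)), fun f x hx y hy => ?_⟩
  have reachable_v :
      ∀ x ∈ (sSup S).verts, ((sSup S).spanningCoe.deleteEdges {f}).Reachable x v := by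
    intro x hx
    rw [verts_sSup, Set.mem_iUnion₂] at hx
    obtain ⟨B, hB, hx⟩ := hx
    exact ((h2 B hB).2 f x hx v (hv B hB)).mono
      (deleteEdges_mono (spanningCoe_le_of_le (le_sSup hB)))
  exact (reachable_v x hx).trans (reachable_v y hy).symm

theorem exists_isBlob_ge {D₀ : G.Subgraph} (h : TwoEdgeConnected D₀.coe) :
    ∃ D, D₀ ≤ D ∧ IsBlob G D := by
  obtain ⟨v⟩ := h.1.nonempty
  let S := {B : G.Subgraph | D₀ ≤ B ∧ TwoEdgeConnected B.coe}
  have hD₀ : D₀ ≤ sSup S := le_sSup ⟨le_rfl, h⟩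
  have hS : TwoEdgeConnected (sSup S).coe :=
    twoEdgeConnected_sSup ⟨D₀, le_rfl, h⟩ (fun B hB => hB.1.1 v.2) (fun B hB => hB.2)
  exact ⟨sSup S, hD₀, hS, fun B hle hB => le_antisymm (le_sSup ⟨hD₀.trans hle, hB⟩) hle⟩

end Subgraph

def Walk.toSubgraphOfLE {u v : V} (p : G.Walk u v) {D : G.Subgraph}
    (h : p.toSubgraph ≤ D) :
    D.coe.Walk ⟨u, h.1 p.start_mem_verts_toSubgraph⟩ ⟨v, h.1 p.end_mem_verts_toSubgraph⟩ :=
  p.mapToSubgraph.map (Subgraph.inclusion h)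

theorem Walk.map_hom_toSubgraphOfLE {u v : V} (p : G.Walk u v)
    {D : G.Subgraph} (h : p.toSubgraph ≤ D) : (p.toSubgraphOfLE h).map D.hom = p :=
  (Walk.map_map _ _ _).trans p.map_mapToSubgraph_hom

theorem Walk.map_val_support_toSubgraphOfLE {u v : V} (p : G.Walk u v)
    {D : G.Subgraph} (h : p.toSubgraph ≤ D) :
    (p.toSubgraphOfLE h).support.map Subtype.val = p.support :=
  (support_map _ _).symm.trans (congrArg support (p.map_hom_toSubgraphOfLE h))

theorem Walk.map_val_edges_toSubgraphOfLE {u v : V} (p : G.Walk u v)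
    {D : G.Subgraph} (h : p.toSubgraph ≤ D) :
    (p.toSubgraphOfLE h).edges.map (Sym2.map Subtype.val) = p.edges :=
  (edges_map _ _).symm.trans (congrArg edges (p.map_hom_toSubgraphOfLE h))

end SimpleGraph

namespace Immersion

variable {U V W : Type*} {H : SimpleGraph U} {G : SimpleGraph V}

def comp (φ : Immersion H G) {H₁ : SimpleGraph W} (f : H₁ →g H) (hf : Function.Injective f) :
    Immersion H₁ G where
  toFun := φ.toFun ∘ f
  injective := φ.injective.comp hf
  walk _ _ h := φ.walk (f.map_rel h)
  walk_isPath _ _ _ := φ.walk_isPath _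
  walk_nontrivial _ _ _ := φ.walk_nontrivial _
  walk_symm _ _ _ := φ.walk_symm _
  walk_edgeDisjoint _ _ _ _ _ _ hne := φ.walk_edgeDisjoint _ _ fun heq =>
    hne (Sym2.map.injective hf (by simpa only [Sym2.map_mk] using heq))
  avoid _ _ _ w hwu hwv := φ.avoid _ (f w) (hf.ne hwu) (hf.ne hwv)

variable (ψ : Immersion H G)

def image : G.Subgraph :=
  (⨆ u, G.singletonSubgraph (ψ.toFun u)) ⊔ ⨆ (u) (v) (h : H.Adj u v), (ψ.walk h).toSubgraph

theorem walk_toSubgraph_le_image {u v : U} (h : H.Adj u v) : (ψ.walk h).toSubgraph ≤ ψ.image :=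
  le_sup_of_le_right (le_iSup₂_of_le u v (le_iSup_of_le h le_rfl))

theorem mem_image_verts {x : V} : x ∈ ψ.image.verts ↔
    (∃ u, ψ.toFun u = x) ∨ ∃ u v, ∃ h : H.Adj u v, x ∈ (ψ.walk h).support := by
  simp [image, eq_comm]

def imageWalk {u v : U} (h : H.Adj u v) : ψ.image.spanningCoe.Walk (ψ.toFun u) (ψ.toFun v) :=
  (ψ.walk h).transfer _ fun _ he => by
    rw [Subgraph.edgeSet_spanningCoe]
    exact Subgraph.edgeSet_mono (ψ.walk_toSubgraph_le_image h)
      ((ψ.walk h).mem_edges_toSubgraph.mpr he)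

theorem reachable_deleteEdges_apply (hH : TwoEdgeConnected H) (f : Sym2 V) (a b : U) :
    (ψ.image.spanningCoe.deleteEdges {f}).Reachable (ψ.toFun a) (ψ.toFun b) := by
  suffices ∃ H', ∃ hle : H' ≤ H, H'.Connected ∧
      ∀ u v (h : H'.Adj u v), f ∉ (ψ.walk (hle h)).edges by
    obtain ⟨H', hle, hconn, hf⟩ := this
    exact (hconn.preconnected a b).map_of_forall_adj ψ.toFun fun u v h =>
      ⟨(ψ.imageWalk (hle h)).toDeleteEdge f
        (by rw [imageWalk, Walk.edges_transfer]; exact hf u v h)⟩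
  -- By edge-disjointness, `f` lies on the path of at most one edge of `H`; delete that edge.
  by_cases hf : ∃ u₀ v₀, ∃ h₀ : H.Adj u₀ v₀, f ∈ (ψ.walk h₀).edges
  · obtain ⟨u₀, v₀, h₀, hf₀⟩ := hf
    refine ⟨H.deleteEdges {s(u₀, v₀)}, deleteEdges_le _, hH.2.2 _ h₀, fun u v h hfuv => ?_⟩
    have hne : s(u₀, v₀) ≠ s(u, v) := fun heq => (deleteEdges_adj.mp h).2 heq.symm
    exact ψ.walk_edgeDisjoint h₀ _ hne f hf₀ hfuv
  · push Not at hf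
    exact ⟨H, le_rfl, hH.1, hf⟩

theorem exists_reachable_deleteEdges_apply (f : Sym2 V) {x : V} (hx : x ∈ ψ.image.verts) :
    ∃ a, (ψ.image.spanningCoe.deleteEdges {f}).Reachable x (ψ.toFun a) := by
  rcases ψ.mem_image_verts.mp hx with ⟨a, rfl⟩ | ⟨u, v, h, hx⟩
  · exact ⟨a, .rfl⟩
  · have htrail : (ψ.imageWalk h).IsTrail := ((ψ.walk_isPath h).transfer _).isTrail
    rcases htrail.reachable_deleteEdges_or (by rwa [imageWalk, Walk.support_transfer]) f with
      hu | hv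
    · exact ⟨u, hu⟩
    · exact ⟨v, hv⟩

theorem twoEdgeConnected_image (hH : TwoEdgeConnected H) : TwoEdgeConnected ψ.image.coe := by
  rw [Subgraph.twoEdgeConnected_coe_iff]
  refine ⟨?_, fun f x hx y hy => ?_⟩
  · obtain ⟨u, v, h⟩ := Sym2.exists.mp hH.2.1
    have hnil : ¬ (ψ.walk h).Nil := by
      rw [← Walk.length_eq_zero_iff]
      exact (ψ.walk_nontrivial h).ne'
    exact ⟨_, Subgraph.mem_edgeSet.mpr
      (ψ.walk_toSubgraph_le_image h |>.2 ((ψ.walk h).toSubgraph_adj_snd hnil))⟩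
  · obtain ⟨a, ha⟩ := ψ.exists_reachable_deleteEdges_apply f hx
    obtain ⟨b, hb⟩ := ψ.exists_reachable_deleteEdges_apply f hy
    exact ha.trans ((ψ.reachable_deleteEdges_apply hH f a b).trans hb.symm)

def codRestrict (D : G.Subgraph) (hD : ψ.image ≤ D) : Immersion H D.coe where
  toFun u := ⟨ψ.toFun u, hD.1 (ψ.mem_image_verts.mpr (.inl ⟨u, rfl⟩))⟩
  injective _ _ huv := ψ.injective (congrArg Subtype.val huv)
  walk _ _ h := (ψ.walk h).toSubgraphOfLE ((ψ.walk_toSubgraph_le_image h).trans hD)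
  walk_isPath _ _ h := (Walk.isPath_map_iff_of_injective D.hom_injective).mp
    (by rw [Walk.map_hom_toSubgraphOfLE]; exact ψ.walk_isPath h)
  walk_nontrivial _ _ h := by
    rw [← Walk.length_map D.hom, Walk.map_hom_toSubgraphOfLE]
    exact ψ.walk_nontrivial h
  walk_symm _ _ h := Walk.map_injective_of_injective D.hom_injective _ _ <| by
    rw [← Walk.reverse_map, Walk.map_hom_toSubgraphOfLE, Walk.map_hom_toSubgraphOfLE]
    exact ψ.walk_symm h
  walk_edgeDisjoint _ _ _ _ h h' hne e he he' :=
    ψ.walk_edgeDisjoint h h' hne (Sym2.map Subtype.val e)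
      (Walk.map_val_edges_toSubgraphOfLE _ _ ▸ List.mem_map_of_mem he)
      (Walk.map_val_edges_toSubgraphOfLE _ _ ▸ List.mem_map_of_mem he')
  avoid _ _ h w hwu hwv hw := ψ.avoid h w hwu hwv
    (Walk.map_val_support_toSubgraphOfLE _ _ ▸ List.mem_map_of_mem hw)

end Immersion

/-- If `C` is a blob of `G` and `C` is not immersed in any blob of `G'`, then `G` is not
immersed in `G'`. -/
theorem not_immersed_of_blob {V W : Type} (G : SimpleGraph V) (G' : SimpleGraph W)
    (C : G.Subgraph) (hC : IsBlob G C)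
    (h : ∀ D : G'.Subgraph, IsBlob G' D → ¬ Immersed C.coe D.coe) :
    ¬ Immersed G G' := by
  rintro ⟨φ⟩
  let ψ := φ.comp C.hom C.hom_injective
  obtain ⟨D, hle, hD⟩ := Subgraph.exists_isBlob_ge (ψ.twoEdgeConnected_image hC.1)
  exact h D hD ⟨ψ.codRestrict D hle⟩
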